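/- For every periodic operator A, the sequence of eigenvalue counting functions F_n : ℝ → [0,1], F_n(λ) = 2^{−n}·#{i : λ_i ≤ λ} where λ_1,…,λ_{2^n} are the eigenvalues (with multiplicity) of the positive semidefinite matrix (A_n)ᴴ A_n, converges uniformly on ℝ as n → ∞. -/

import Mathlib

open Filter Topology Matrix

/-- A *periodic operator* is a function `A : ℤ × ℤ → ℂ` such that for some `n ≥ 1`,
`A(x,y) = 0` whenever `|x−y| > 2^n` and `A(x+2^n, y+2^n) = A(x,y)` for all `x, y ∈ ℤ`. -/
def IsPeriodicOp (A : ℤ → ℤ → ℂ) : Prop :=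
  ∃ n : ℕ, 1 ≤ n ∧ (∀ x y : ℤ, |x - y| > 2 ^ n → A x y = 0) ∧
    (∀ x y : ℤ, A (x + 2 ^ n) (y + 2 ^ n) = A x y)

/-- The truncation `A_n`, viewed as the `2^n × 2^n` matrix `(A(x,y))_{0 ≤ x,y ≤ 2^n−1}`. -/
noncomputable def trunc (A : ℤ → ℤ → ℂ) (n : ℕ) : Matrix (Fin (2 ^ n)) (Fin (2 ^ n)) ℂ :=
  fun i j => A ((i : ℕ) : ℤ) ((j : ℕ) : ℤ)

/-- The eigenvalue counting function `F_n(λ) = 2^{−n}·#{i : λ_i ≤ λ}`, where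
`λ_1, …, λ_{2^n}` are the eigenvalues (with multiplicity) of the positive semidefinite
matrix `(A_n)ᴴ A_n`. -/
noncomputable def countingFun (A : ℤ → ℤ → ℂ) (n : ℕ) (lam : ℝ) : ℝ :=
  (((Finset.univ : Finset (Fin (2 ^ n))).filter fun i =>
      (Matrix.isHermitian_conjTranspose_mul_self (trunc A n)).eigenvalues i ≤ lam).card : ℝ) / 2 ^ n

/-!
Write `N_n(λ)` for the number of eigenvalues `≤ λ` of `A_nᴴ A_n`, so that `F_n = N_n / 2^n`, and
let `2^m` be both the bandwidth and the period of `A`. For `n ≥ m`, the upper-left `2^n`-block of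
`A_{n+1}` is `A_n`, by periodicity so is the lower-right one, and the band condition kills the
off-diagonal blocks except in the `2^(m+1)` rows around the middle. So `A_{n+1}` differs from
`diag(A_n, A_n)` by a matrix of rank at most `2^(m+1)`. By the min-max principle, changing `X` by
rank `r` changes the eigenvalue count of `Xᴴ X` by at most `r`; hence
`|N_{n+1}(λ) - 2 N_n(λ)| ≤ 2^(m+1)`, that is `|F_{n+1}(λ) - F_n(λ)| ≤ 2^(m-n)` uniformly in `λ`,
and `F_n` converges uniformly.
-/

open Module Finset

lemma exists_tendstoUniformly_of_norm_sub_le {β F : Type*} [NormedAddCommGroup F]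
    [CompleteSpace F] {f : ℕ → β → F} {u : ℕ → ℝ} (hu : Summable u)
    (hf : ∀ n x, ‖f (n + 1) x - f n x‖ ≤ u n) : ∃ g, TendstoUniformly f g atTop := by
  refine ⟨fun x => f 0 x + ∑' n, (f (n + 1) x - f n x), ?_⟩
  have hsum := tendstoUniformly_tsum_nat hu hf
  rw [Metric.tendstoUniformly_iff] at hsum ⊢
  intro ε hε
  filter_upwards [hsum ε hε] with N hN x
  have hx := hN x
  rw [sum_range_sub (fun n => f n x), dist_eq_norm] at hx
  rw [dist_eq_norm]
  convert hx using 2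
  abel

lemma Matrix.rank_le_card_of_eq_zero_of_notMem {m n R : Type*} [Fintype m] [Fintype n]
    [DecidableEq m] [Field R] (D : Matrix m n R) (S : Finset m)
    (h : ∀ i ∉ S, ∀ j, D i j = 0) : D.rank ≤ #S := by
  classical
  set P : Matrix m m R := diagonal fun i => if i ∈ S then 1 else 0
  have hD : P * D = D := by
    ext i j
    by_cases hi : i ∈ S <;> simp [P, hi, h]
  calc D.rank = (P * D).rank := by rw [hD]
    _ ≤ P.rank := rank_mul_le_left _ _
    _ = #S := by simp [P, rank_diagonal]

section
variable {𝕜 ι : Type*} [RCLike 𝕜] [Fintype ι]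

lemma Matrix.re_star_dotProduct_self (c : ι → 𝕜) :
    RCLike.re (star c ⬝ᵥ c) = ∑ i, ‖c i‖ ^ 2 := by
  simp only [dotProduct, map_sum, Pi.star_apply, RCLike.star_def, RCLike.conj_mul,
    RCLike.re_ofReal_pow]

lemma sum_mul_norm_sq_le {t : ι → ℝ} {lam : ℝ} {c : ι → 𝕜} (hc : ∀ i, ¬ t i ≤ lam → c i = 0) :
    ∑ i, t i * ‖c i‖ ^ 2 ≤ lam * ∑ i, ‖c i‖ ^ 2 := by
  rw [mul_sum]
  refine sum_le_sum fun i _ => ?_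
  by_cases hi : t i ≤ lam
  · exact mul_le_mul_of_nonneg_right hi (sq_nonneg _)
  · simp [hc i hi]

lemma lt_sum_mul_norm_sq {t : ι → ℝ} {lam : ℝ} {c : ι → 𝕜} (hc : ∀ i, ¬ lam < t i → c i = 0)
    (hc₀ : c ≠ 0) : lam * ∑ i, ‖c i‖ ^ 2 < ∑ i, t i * ‖c i‖ ^ 2 := by
  obtain ⟨i₀, hi₀⟩ := Function.ne_iff.mp hc₀
  rw [mul_sum]
  refine sum_lt_sum (fun i _ => ?_) ⟨i₀, mem_univ _, ?_⟩
  · by_cases hi : lam < t i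
    · exact mul_le_mul_of_nonneg_right hi.le (sq_nonneg _)
    · simp [hc i hi]
  · have hlt : lam < t i₀ := by_contra fun h => hi₀ (hc i₀ h)
    exact mul_lt_mul_of_pos_right hlt (by positivity)

end

lemma Matrix.UnitaryGroup.toLinearEquiv_apply {n α : Type*} [Fintype n] [DecidableEq n]
    [CommRing α] [StarRing α] (U : unitaryGroup n α) (c : n → α) :
    UnitaryGroup.toLinearEquiv U c = (U : Matrix n n α) *ᵥ c :=
  rfl

namespace Matrix.IsHermitian
variable {𝕜 ι : Type*} [RCLike 𝕜] [Fintype ι] [DecidableEq ι] {M : Matrix ι ι 𝕜}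

noncomputable def eigenvalueCount (hM : M.IsHermitian) (lam : ℝ) : ℕ :=
  #{i | hM.eigenvalues i ≤ lam}

lemma eigenvalueCount_le_card (hM : M.IsHermitian) (lam : ℝ) :
    hM.eigenvalueCount lam ≤ Fintype.card ι :=
  card_filter_le _ _

lemma re_star_dotProduct_mulVec_eigenvectorUnitary (hM : M.IsHermitian) (c : ι → 𝕜) :
    RCLike.re (star ((hM.eigenvectorUnitary : Matrix ι ι 𝕜) *ᵥ c) ⬝ᵥ
        (M *ᵥ ((hM.eigenvectorUnitary : Matrix ι ι 𝕜) *ᵥ c))) =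
      ∑ i, hM.eigenvalues i * ‖c i‖ ^ 2 := by
  have hdiag := hM.conjStarAlgAut_star_eigenvectorUnitary
  rw [Unitary.conjStarAlgAut_apply, Unitary.coe_star, star_star] at hdiag
  rw [star_mulVec, mulVec_mulVec, dotProduct_mulVec, vecMul_vecMul, ← dotProduct_mulVec,
    ← Matrix.star_eq_conjTranspose, ← Matrix.mul_assoc, hdiag]
  simp only [dotProduct, map_sum, mulVec_diagonal, Function.comp_apply, Pi.star_apply,
    RCLike.star_def, mul_left_comm _ (RCLike.ofReal _ : 𝕜), RCLike.conj_mul]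
  norm_cast

lemma star_dotProduct_eigenvectorUnitary (hM : M.IsHermitian) (c : ι → 𝕜) :
    star ((hM.eigenvectorUnitary : Matrix ι ι 𝕜) *ᵥ c) ⬝ᵥ
      ((hM.eigenvectorUnitary : Matrix ι ι 𝕜) *ᵥ c) = star c ⬝ᵥ c := by
  rw [star_mulVec, dotProduct_mulVec, vecMul_vecMul, ← Matrix.star_eq_conjTranspose,
    Unitary.coe_star_mul_self, vecMul_one]

lemma finrank_le_eigenvalueCount (hM : M.IsHermitian) {lam : ℝ} {V : Submodule 𝕜 (ι → 𝕜)}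
    (hV : ∀ x ∈ V, RCLike.re (star x ⬝ᵥ (M *ᵥ x)) ≤ lam * RCLike.re (star x ⬝ᵥ x)) :
    finrank 𝕜 V ≤ hM.eigenvalueCount lam := by
  set W := (Pi.spanSubset 𝕜 {i | lam < hM.eigenvalues i}).map
    (UnitaryGroup.toLinearEquiv hM.eigenvectorUnitary).toLinearMap
  have hdisj : Disjoint V W := by
    rw [Submodule.disjoint_def]
    rintro _ hxV ⟨c, hc, rfl⟩
    by_contra hx
    have hc₀ : c ≠ 0 := by rintro rfl; exact hx (map_zero _)
    have := hV _ hxV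
    rw [LinearEquiv.coe_coe, UnitaryGroup.toLinearEquiv_apply,
      re_star_dotProduct_mulVec_eigenvectorUnitary, star_dotProduct_eigenvectorUnitary,
      re_star_dotProduct_self] at this
    exact this.not_gt (lt_sum_mul_norm_sq (Pi.mem_spanSubset_iff.mp hc) hc₀)
  have hdim := Submodule.finrank_add_finrank_le_of_disjoint hdisj
  rw [LinearEquiv.finrank_map_eq, Pi.dim_spanSubset, finrank_fintype_fun_eq_card] at hdim
  have hsplit : hM.eigenvalueCount lam + {i | lam < hM.eigenvalues i}.ncard = Fintype.card ι := by
    rw [Set.ncard_eq_toFinset_card', Set.toFinset_ofPred]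
    simpa [eigenvalueCount, not_le] using
      card_filter_add_card_filter_not (s := univ) (fun i => hM.eigenvalues i ≤ lam)
  omega

lemma exists_finrank_eq_eigenvalueCount (hM : M.IsHermitian) (lam : ℝ) :
    ∃ V : Submodule 𝕜 (ι → 𝕜), finrank 𝕜 V = hM.eigenvalueCount lam ∧
      ∀ x ∈ V, RCLike.re (star x ⬝ᵥ (M *ᵥ x)) ≤ lam * RCLike.re (star x ⬝ᵥ x) := by
  refine ⟨(Pi.spanSubset 𝕜 {i | hM.eigenvalues i ≤ lam}).map
    (UnitaryGroup.toLinearEquiv hM.eigenvectorUnitary).toLinearMap, ?_, ?_⟩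
  · rw [LinearEquiv.finrank_map_eq, Pi.dim_spanSubset, Set.ncard_eq_toFinset_card',
      Set.toFinset_ofPred]
    rfl
  · rintro _ ⟨c, hc, rfl⟩
    rw [LinearEquiv.coe_coe, UnitaryGroup.toLinearEquiv_apply,
      re_star_dotProduct_mulVec_eigenvectorUnitary, star_dotProduct_eigenvectorUnitary,
      re_star_dotProduct_self]
    exact sum_mul_norm_sq_le (Pi.mem_spanSubset_iff.mp hc)

lemma eigenvalueCount_eq_card_roots (hM : M.IsHermitian) (lam : ℝ) :
    hM.eigenvalueCount lam = ((M.charpoly.roots.map RCLike.re).filter (· ≤ lam)).card := by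
  rw [hM.roots_charpoly_eq_eigenvalues, Multiset.map_map, Multiset.filter_map,
    Multiset.card_map]
  simp only [Function.comp_def, RCLike.ofReal_re]
  rfl

lemma eigenvalueCount_eq_add_of_charpoly_eq_mul {κ κ' : Type*} [Fintype κ] [DecidableEq κ]
    [Fintype κ'] [DecidableEq κ'] {N : Matrix κ κ 𝕜} {K : Matrix κ' κ' 𝕜}
    (hM : M.IsHermitian) (hN : N.IsHermitian) (hK : K.IsHermitian)
    (h : M.charpoly = N.charpoly * K.charpoly) (lam : ℝ) :
    hM.eigenvalueCount lam = hN.eigenvalueCount lam + hK.eigenvalueCount lam := by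
  simp only [eigenvalueCount_eq_card_roots, h,
    Polynomial.roots_mul (mul_ne_zero N.charpoly_monic.ne_zero K.charpoly_monic.ne_zero),
    Multiset.map_add, Multiset.filter_add, Multiset.card_add]

end Matrix.IsHermitian

lemma Matrix.star_dotProduct_conjTranspose_mul_self_mulVec {α κ ι : Type*} [CommSemiring α]
    [StarRing α] [Fintype κ] [Fintype ι] (A : Matrix κ ι α) (x : ι → α) :
    star x ⬝ᵥ ((Aᴴ * A) *ᵥ x) = star (A *ᵥ x) ⬝ᵥ (A *ᵥ x) := by
  rw [← mulVec_mulVec, dotProduct_mulVec, star_mulVec]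

open Matrix.IsHermitian in
lemma Matrix.eigenvalueCount_conjTranspose_mul_self_le {𝕜 κ ι : Type*} [RCLike 𝕜] [Fintype κ]
    [Fintype ι] [DecidableEq ι] (A B : Matrix κ ι 𝕜) (lam : ℝ) :
    (isHermitian_conjTranspose_mul_self A).eigenvalueCount lam ≤
      (isHermitian_conjTranspose_mul_self B).eigenvalueCount lam + (A - B).rank := by
  obtain ⟨V, hVdim, hV⟩ :=
    (isHermitian_conjTranspose_mul_self A).exists_finrank_eq_eigenvalueCount lam
  set K := LinearMap.ker (A - B).mulVecLin
  have hK : (A - B).rank + finrank 𝕜 K = Fintype.card ι := by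
    rw [rank, LinearMap.finrank_range_add_finrank_ker, finrank_fintype_fun_eq_card]
  have hVK : finrank 𝕜 ↥(V ⊓ K) ≤ (isHermitian_conjTranspose_mul_self B).eigenvalueCount lam := by
    refine finrank_le_eigenvalueCount _ fun x ⟨hxV, hxK⟩ => ?_
    have hAB : A *ᵥ x = B *ᵥ x := by
      rw [← sub_eq_zero, ← sub_mulVec]
      exact hxK
    rw [star_dotProduct_conjTranspose_mul_self_mulVec, ← hAB,
      ← star_dotProduct_conjTranspose_mul_self_mulVec]
    exact hV x hxV
  have hsup : finrank 𝕜 ↥(V ⊔ K) ≤ Fintype.card ι :=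
    (Submodule.finrank_le _).trans_eq (finrank_fintype_fun_eq_card 𝕜)
  have := Submodule.finrank_sup_add_finrank_inf_eq V K
  omega

def IsPeriodicOpWith (A : ℤ → ℤ → ℂ) (m : ℕ) : Prop :=
  (∀ x y : ℤ, |x - y| > 2 ^ m → A x y = 0) ∧ ∀ x y : ℤ, A (x + 2 ^ m) (y + 2 ^ m) = A x y

lemma IsPeriodicOpWith.apply_add_two_pow {A : ℤ → ℤ → ℂ} {m n : ℕ} (hA : IsPeriodicOpWith A m)
    (hmn : m ≤ n) (x y : ℤ) : A (x + 2 ^ n) (y + 2 ^ n) = A x y := by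
  have hperiodic : Function.Periodic (fun t => A (x + t) (y + t)) (2 ^ m) := fun t => by
    simpa only [add_assoc] using hA.2 (x + t) (y + t)
  have h2n : (2 : ℤ) ^ n = (2 ^ (n - m) : ℕ) * 2 ^ m := by
    push_cast
    rw [← pow_add, Nat.sub_add_cancel hmn]
  simpa [h2n] using hperiodic.nat_mul (2 ^ (n - m)) 0

def finTwoPowSuccEquiv (n : ℕ) : Fin (2 ^ (n + 1)) ≃ Fin (2 ^ n) ⊕ Fin (2 ^ n) :=
  (finCongr (pow_succ 2 n ▸ mul_two _)).trans finSumFinEquiv.symm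

@[simp] lemma val_finTwoPowSuccEquiv_symm_inl (n : ℕ) (k : Fin (2 ^ n)) :
    ((finTwoPowSuccEquiv n).symm (Sum.inl k) : ℕ) = k := rfl

@[simp] lemma val_finTwoPowSuccEquiv_symm_inr (n : ℕ) (k : Fin (2 ^ n)) :
    ((finTwoPowSuccEquiv n).symm (Sum.inr k) : ℕ) = 2 ^ n + k := rfl

noncomputable def truncBlocks (A : ℤ → ℤ → ℂ) (n : ℕ) :
    Matrix (Fin (2 ^ (n + 1))) (Fin (2 ^ (n + 1))) ℂ :=
  (fromBlocks (trunc A n) 0 0 (trunc A n)).submatrix (finTwoPowSuccEquiv n) (finTwoPowSuccEquiv n)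

lemma trunc_succ_apply_eq_truncBlocks {A : ℤ → ℤ → ℂ} {m n : ℕ} (hA : IsPeriodicOpWith A m)
    (hmn : m ≤ n) (i j : Fin (2 ^ (n + 1)))
    (hi : (i : ℕ) + 2 ^ m < 2 ^ n ∨ 2 ^ n + 2 ^ m ≤ (i : ℕ)) :
    trunc A (n + 1) i j = truncBlocks A n i j := by
  obtain ⟨a, rfl⟩ := (finTwoPowSuccEquiv n).symm.surjective i
  obtain ⟨b, rfl⟩ := (finTwoPowSuccEquiv n).symm.surjective j
  rcases a with k | k <;> rcases b with l | l <;>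
    simp only [truncBlocks, trunc, submatrix_apply, Equiv.apply_symm_apply, fromBlocks_apply₁₁,
      fromBlocks_apply₁₂, fromBlocks_apply₂₁, fromBlocks_apply₂₂, Matrix.zero_apply,
      val_finTwoPowSuccEquiv_symm_inl, val_finTwoPowSuccEquiv_symm_inr] at hi ⊢
  · have hk : (k : ℤ) + 2 ^ m < 2 ^ n := by
      have := k.isLt
      exact_mod_cast (by omega : (k : ℕ) + 2 ^ m < 2 ^ n)
    apply hA.1
    push_cast
    exact lt_abs.mpr (Or.inr (by linarith [Int.natCast_nonneg (l : ℕ)]))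
  · have hk : 2 ^ n + 2 ^ m ≤ 2 ^ n + (k : ℤ) := by
      exact_mod_cast (by omega : 2 ^ n + 2 ^ m ≤ 2 ^ n + (k : ℕ))
    have hl : (l : ℤ) < 2 ^ n := by exact_mod_cast l.isLt
    apply hA.1
    push_cast
    exact lt_abs.mpr (Or.inl (by linarith))
  · push_cast
    rw [add_comm _ (k : ℤ), add_comm _ (l : ℤ)]
    exact hA.apply_add_two_pow hmn _ _

noncomputable def truncCount (A : ℤ → ℤ → ℂ) (n : ℕ) (lam : ℝ) : ℕ :=
  (isHermitian_conjTranspose_mul_self (trunc A n)).eigenvalueCount lam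

lemma countingFun_eq_truncCount_div (A : ℤ → ℤ → ℂ) (n : ℕ) (lam : ℝ) :
    countingFun A n lam = truncCount A n lam / 2 ^ n :=
  rfl

lemma truncCount_le (A : ℤ → ℤ → ℂ) (n : ℕ) (lam : ℝ) : truncCount A n lam ≤ 2 ^ n :=
  (IsHermitian.eigenvalueCount_le_card _ lam).trans_eq (Fintype.card_fin _)

lemma charpoly_conjTranspose_mul_self_truncBlocks (A : ℤ → ℤ → ℂ) (n : ℕ) :
    ((truncBlocks A n)ᴴ * truncBlocks A n).charpoly =
      ((trunc A n)ᴴ * trunc A n).charpoly * ((trunc A n)ᴴ * trunc A n).charpoly := by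
  rw [truncBlocks, conjTranspose_submatrix, submatrix_mul_equiv, fromBlocks_conjTranspose,
    fromBlocks_multiply, ← Equiv.symm_symm (finTwoPowSuccEquiv n), ← reindex_apply,
    charpoly_reindex]
  simp

lemma eigenvalueCount_truncBlocks (A : ℤ → ℤ → ℂ) (n : ℕ) (lam : ℝ) :
    (isHermitian_conjTranspose_mul_self (truncBlocks A n)).eigenvalueCount lam =
      2 * truncCount A n lam := by
  rw [two_mul]
  exact IsHermitian.eigenvalueCount_eq_add_of_charpoly_eq_mul _ _ _
    (charpoly_conjTranspose_mul_self_truncBlocks A n) lam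

lemma truncCount_succ_le {A : ℤ → ℤ → ℂ} {m n : ℕ} (hA : IsPeriodicOpWith A m) (hmn : m ≤ n)
    (lam : ℝ) :
    truncCount A (n + 1) lam ≤ 2 * truncCount A n lam + 2 ^ (m + 1) ∧
      2 * truncCount A n lam ≤ truncCount A (n + 1) lam + 2 ^ (m + 1) := by
  have hm : 2 ^ m ≤ 2 ^ n := Nat.pow_le_pow_right (by norm_num) hmn
  set S : Finset (Fin (2 ^ (n + 1))) := {i | 2 ^ n ≤ (i : ℕ) + 2 ^ m ∧ (i : ℕ) < 2 ^ n + 2 ^ m}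
  have hS : #S ≤ 2 ^ (m + 1) :=
    calc #S = #(S.map Fin.valEmbedding) := (card_map _).symm
      _ ≤ #(Ico (2 ^ n - 2 ^ m) (2 ^ n + 2 ^ m)) := card_le_card fun x => by simp [S]; omega
      _ = 2 ^ (m + 1) := by rw [Nat.card_Ico, pow_succ]; omega
  have heq : ∀ i ∉ S, ∀ j, trunc A (n + 1) i j = truncBlocks A n i j := fun i hi j =>
    trunc_succ_apply_eq_truncBlocks hA hmn i j (by simp [S] at hi; omega)
  have hrank₁ := rank_le_card_of_eq_zero_of_notMem (trunc A (n + 1) - truncBlocks A n) S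
    fun i hi j => by rw [Matrix.sub_apply, heq i hi j, sub_self]
  have hrank₂ := rank_le_card_of_eq_zero_of_notMem (truncBlocks A n - trunc A (n + 1)) S
    fun i hi j => by rw [Matrix.sub_apply, heq i hi j, sub_self]
  have h₁ : truncCount A (n + 1) lam ≤
      2 * truncCount A n lam + (trunc A (n + 1) - truncBlocks A n).rank := by
    rw [← eigenvalueCount_truncBlocks]
    exact eigenvalueCount_conjTranspose_mul_self_le _ _ lam
  have h₂ : 2 * truncCount A n lam ≤
      truncCount A (n + 1) lam + (truncBlocks A n - trunc A (n + 1)).rank := by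
    rw [← eigenvalueCount_truncBlocks]
    exact eigenvalueCount_conjTranspose_mul_self_le _ _ lam
  omega

lemma abs_truncCount_succ_sub_le {A : ℤ → ℤ → ℂ} {m : ℕ} (hA : IsPeriodicOpWith A m) (n : ℕ)
    (lam : ℝ) : |(truncCount A (n + 1) lam : ℝ) - 2 * truncCount A n lam| ≤ 2 ^ (m + 1) := by
  obtain ⟨h₁, h₂⟩ : truncCount A (n + 1) lam ≤ 2 * truncCount A n lam + 2 ^ (m + 1) ∧
      2 * truncCount A n lam ≤ truncCount A (n + 1) lam + 2 ^ (m + 1) := by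
    by_cases hmn : m ≤ n
    · exact truncCount_succ_le hA hmn lam
    · have hpow : 2 ^ (n + 1) ≤ 2 ^ (m + 1) := Nat.pow_le_pow_right (by norm_num) (by omega)
      have := truncCount_le A (n + 1) lam
      have := truncCount_le A n lam
      have := pow_succ' 2 n
      omega
  rify at h₁ h₂
  rw [abs_le]
  constructor <;> linarith

lemma norm_countingFun_succ_sub_le {A : ℤ → ℤ → ℂ} {m : ℕ} (hA : IsPeriodicOpWith A m) (n : ℕ)
    (lam : ℝ) : ‖countingFun A (n + 1) lam - countingFun A n lam‖ ≤ 2 ^ m * (1 / 2) ^ n := by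
  have hdiff : countingFun A (n + 1) lam - countingFun A n lam =
      ((truncCount A (n + 1) lam : ℝ) - 2 * truncCount A n lam) / 2 ^ (n + 1) := by
    rw [countingFun_eq_truncCount_div, countingFun_eq_truncCount_div]
    field_simp
    ring
  rw [Real.norm_eq_abs, hdiff, abs_div, abs_of_pos (by positivity : (0 : ℝ) < 2 ^ (n + 1))]
  calc _ ≤ (2 : ℝ) ^ (m + 1) / 2 ^ (n + 1) := by gcongr; exact abs_truncCount_succ_sub_le hA n lam
    _ = 2 ^ m * (1 / 2) ^ n := by rw [_root_.one_div_pow, pow_succ, pow_succ]; field_simp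

/-- for every periodic operator `A`, the eigenvalue counting functions
`F_n` of the matrices `(A_n)ᴴ A_n` converge uniformly on ℝ as `n → ∞`. -/
theorem stmt18 (A : ℤ → ℤ → ℂ) (hA : IsPeriodicOp A) :
    ∃ F : ℝ → ℝ, TendstoUniformly (fun n : ℕ => countingFun A n) F Filter.atTop := by
  obtain ⟨m, -, hAm⟩ := hA
  exact exists_tendstoUniformly_of_norm_sub_le (summable_geometric_two.mul_left (2 ^ m))
    (norm_countingFun_succ_sub_le hAm)
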